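/- Let (X,μ) be a σ-finite measure space. If (u_k, t_k) → (u, t) in L¹(X,μ) × ℝ with t, t_k > 0, then μ({u_k ≥ t_k} \ {u ≥ t}) → 0 as k → ∞. -/

import Mathlib

open MeasureTheory Filter Set
open scoped ENNReal Topology

/-!
If `u_k ≥ t_k` but `v < s` at a point, then either `v` lies in the thin band `[s - δ, s)` or
`u_k` and `v` differ by at least `δ / 2` there, as soon as `t_k ≥ s - δ / 2`. The bands shrink to
the empty set and have finite measure because `v` is integrable and `s > 0`, so their measure
tends to `0` as `δ → 0`; for fixed `δ`, the second set has small measure for large `k` because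
`L¹` convergence implies convergence in measure.
-/

section

variable {α : Type*} [MeasurableSpace α] {μ : Measure α}

theorem tendstoInMeasure_of_tendsto_integral_norm_sub {ι E : Type*} [NormedAddCommGroup E]
    {l : Filter ι} {f : ι → α → E} {g : α → E} (hf : ∀ i, Integrable (f i) μ)
    (hg : Integrable g μ) (hfg : Tendsto (fun i => ∫ x, ‖f i x - g x‖ ∂μ) l (𝓝 0)) :
    TendstoInMeasure μ f l g := by
  refine tendstoInMeasure_of_tendsto_eLpNorm one_ne_zero (fun i => (hf i).aestronglyMeasurable)
    hg.aestronglyMeasurable ?_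
  have hnorm : ∀ i, eLpNorm (f i - g) 1 μ = ENNReal.ofReal (∫ x, ‖f i x - g x‖ ∂μ) := fun i => by
    rw [eLpNorm_one_eq_lintegral_enorm, ← ofReal_integral_norm_eq_lintegral_enorm ((hf i).sub hg)]
    rfl
  simpa only [hnorm, ENNReal.ofReal_zero] using ENNReal.tendsto_ofReal hfg

theorem tendsto_measure_preimage_Ico_nhdsGT_zero {v : α → ℝ} {s : ℝ} (hv : Integrable v μ)
    (hs : 0 < s) : Tendsto (fun δ => μ (v ⁻¹' Ico (s - δ) s)) (𝓝[>] 0) (𝓝 0) := by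
  have hempty : ⋂ δ > (0 : ℝ), v ⁻¹' Ico (s - δ) s = ∅ := by
    refine eq_empty_of_forall_notMem fun x hx => ?_
    simp only [mem_iInter, mem_preimage, mem_Ico] at hx
    have hlt : v x < s := (hx 1 one_pos).2
    linarith [(hx ((s - v x) / 2) (by linarith)).1]
  have hfinite : μ (v ⁻¹' Ico (s - s / 2) s) ≠ ∞ :=
    ne_top_of_le_ne_top (hv.measure_ge_lt_top (half_pos hs)).ne
      (measure_mono fun x (hx : s - s / 2 ≤ v x ∧ v x < s) =>
        show s / 2 ≤ v x by linarith [hx.1])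
  simpa only [hempty, measure_empty, Function.comp_def] using
    tendsto_measure_biInter_gt (μ := μ) (s := fun δ => v ⁻¹' Ico (s - δ) s)
      (fun _ _ => hv.aemeasurable.nullMeasurable measurableSet_Ico)
      (fun _ _ _ hij => preimage_mono (Ico_subset_Ico_left (by linarith)))
      ⟨s / 2, half_pos hs, hfinite⟩

end

theorem superlevel_diff_superlevel_subset {α : Type*} {u v : α → ℝ} {r s δ : ℝ}
    (hr : s - δ / 2 ≤ r) :
    {x | r ≤ u x} \ {x | s ≤ v x} ⊆
      v ⁻¹' Ico (s - δ) s ∪ {x | ENNReal.ofReal (δ / 2) ≤ edist (u x) (v x)} := by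
  rintro x ⟨hux, hvx⟩
  simp only [mem_ofPred_eq, not_le] at hux hvx
  by_cases hband : s - δ ≤ v x
  · exact Or.inl ⟨hband, hvx⟩
  · right
    rw [mem_ofPred_eq, edist_dist, Real.dist_eq]
    exact ENNReal.ofReal_le_ofReal ((by linarith : δ / 2 ≤ u x - v x).trans (le_abs_self _))

theorem stmt5_general {X : Type*} [MeasurableSpace X] (μ : Measure X)
    (u : ℕ → X → ℝ) (v : X → ℝ) (t : ℕ → ℝ) (s : ℝ)
    (hu : ∀ k, Integrable (u k) μ) (hv : Integrable v μ)
    (hconv : Tendsto (fun k => ∫ x, |u k x - v x| ∂μ) atTop (nhds 0))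
    (ht : Tendsto t atTop (nhds s)) (hs : 0 < s) :
    Tendsto (fun k => μ ({x | t k ≤ u k x} \ {x | s ≤ v x})) atTop (nhds 0) := by
  rw [ENNReal.tendsto_nhds_zero]
  intro ε hε
  have hε2 : 0 < ε / 2 := ENNReal.half_pos hε.ne'
  obtain ⟨δ, hband, hδ⟩ : ∃ δ, μ (v ⁻¹' Ico (s - δ) s) < ε / 2 ∧ 0 < δ :=
    ((tendsto_measure_preimage_Ico_nhdsGT_zero hv hs).eventually_lt_const hε2).and
      self_mem_nhdsWithin |>.exists
  have hinMeasure : TendstoInMeasure μ u atTop v :=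
    tendstoInMeasure_of_tendsto_integral_norm_sub hu hv (by simpa only [Real.norm_eq_abs])
  filter_upwards [(hinMeasure (ENNReal.ofReal (δ / 2)) (by positivity)).eventually_lt_const hε2,
    ht.eventually_const_le (by linarith : s - δ / 2 < s)] with k hfar ht_k
  calc μ ({x | t k ≤ u k x} \ {x | s ≤ v x})
      ≤ μ (v ⁻¹' Ico (s - δ) s) + μ {x | ENNReal.ofReal (δ / 2) ≤ edist (u k x) (v x)} :=
        (measure_mono (superlevel_diff_superlevel_subset ht_k)).trans (measure_union_le _ _)
    _ ≤ ε := by simpa only [ENNReal.add_halves] using add_le_add hband.le hfar.le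

/-- Semicontinuity of slicing: if `u_k → u` in `L¹(X,μ)` and `t_k → t` with `t, t_k > 0`,
then `μ({u_k ≥ t_k} \ {u ≥ t}) → 0` as `k → ∞`. -/
theorem stmt5 {X : Type*} [MeasurableSpace X] (μ : Measure X) [SigmaFinite μ]
    (u : ℕ → X → ℝ) (v : X → ℝ) (t : ℕ → ℝ) (s : ℝ)
    (hu : ∀ k, Integrable (u k) μ) (hv : Integrable v μ)
    (hconv : Tendsto (fun k => ∫ x, |u k x - v x| ∂μ) atTop (nhds 0))
    (ht : Tendsto t atTop (nhds s)) (hs : 0 < s) (htk : ∀ k, 0 < t k) :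
    Tendsto (fun k => μ ({x | t k ≤ u k x} \ {x | s ≤ v x})) atTop (nhds 0) :=
  stmt5_general μ u v t s hu hv hconv ht hs
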